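/- For every r ∈ (0,1), h_r(B(r)) ≥ B(1/r) + 1, where B is the (standard) Brjuno function satisfying B(α) = α·B(1/α) + log(1/α), and h_r is defined by h_r(y) = r^{−1}(y − log(1/r) + 1) for y ≥ log(1/r) and h_r(y) = e^y for y ≤ log(1/r). -/
import Mathlib

set_option maxHeartbeats 1000000


/-- The Herman comparison function `h_r`. -/
noncomputable def hfun (r : ℝ) (y : ℝ) : ℝ :=
  if Real.log (1 / r) ≤ y then r⁻¹ * (y - Real.log (1 / r) + 1) else Real.exp y

/-- The standard continued fraction entries `α̃_n`. -/
noncomputable def scf (α : ℝ) : ℕ → ℝ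
  | 0 => Int.fract α
  | n + 1 => Int.fract (1 / scf α n)

/-- `sbeta α n = β̃_{n-1} = ∏_{i=0}^{n-1} α̃_i`, with `sbeta α 0 = 1`. -/
noncomputable def sbeta (α : ℝ) (n : ℕ) : ℝ := ∏ i ∈ Finset.range n, scf α i

/-- The standard Brjuno function `B̃(α) = ∑_{n≥0} β̃_{n-1} log(1/α̃_n)`,
with values in `(0, +∞]`. -/
noncomputable def sbrjuno (α : ℝ) : ENNReal :=
  ∑' n : ℕ, ENNReal.ofReal (sbeta α n * Real.log (1 / scf α n))

lemma scf_shift (r : ℝ) (h0 : 0 ≤ r) (h1 : r < 1) :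
    ∀ n, scf (1 / r) n = scf r (n + 1) := by
  intro n
  induction n with
  | zero => simp [scf, Int.fract_eq_self.mpr ⟨h0, h1⟩]
  | succ n ih => show Int.fract (1 / scf (1/r) n) = Int.fract (1 / scf r (n+1)); rw [ih]

lemma sbeta_shift (r : ℝ) (h0 : 0 ≤ r) (h1 : r < 1) (n : ℕ) :
    sbeta r (n + 1) = r * sbeta (1 / r) n := by
  unfold sbeta
  rw [Finset.prod_range_succ']
  have : ∀ i ∈ Finset.range n, scf r (i + 1) = scf (1/r) i := fun i _ =>
    (scf_shift r h0 h1 i).symm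
  rw [Finset.prod_congr rfl this]
  simp [scf, Int.fract_eq_self.mpr ⟨h0, h1⟩, mul_comm]

lemma key (r : ℝ) (h0 : 0 < r) (h1 : r < 1) :
    sbrjuno r = ENNReal.ofReal (Real.log (1 / r)) + ENNReal.ofReal r * sbrjuno (1 / r) := by
  unfold sbrjuno
  rw [tsum_eq_zero_add' ENNReal.summable]
  congr 1
  · simp [sbeta, scf, Int.fract_eq_self.mpr ⟨h0.le, h1⟩]
  · rw [← ENNReal.tsum_mul_left]
    apply tsum_congr
    intro n
    rw [sbeta_shift r h0.le h1 n, scf_shift r h0.le h1 n]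
    rw [mul_assoc, ENNReal.ofReal_mul h0.le]

theorem stmt_17 (r : ℝ) (h0 : 0 < r) (h1 : r < 1) (hirr : Irrational r) :
    (sbrjuno r = ⊤ → sbrjuno (1 / r) = ⊤) ∧
    (sbrjuno r ≠ ⊤ →
      sbrjuno (1 / r) + 1 ≤ ENNReal.ofReal (hfun r (sbrjuno r).toReal)) := by
  have hkey := key r h0 h1
  have hlog : (0:ℝ) ≤ Real.log (1 / r) := Real.log_nonneg (by
    rw [le_div_iff₀ h0]; linarith)
  constructor
  · intro htop
    by_contra hne
    have : ENNReal.ofReal (Real.log (1 / r)) + ENNReal.ofReal r * sbrjuno (1 / r) ≠ ⊤ := by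
      apply ENNReal.add_ne_top.mpr
      exact ⟨ENNReal.ofReal_ne_top, ENNReal.mul_ne_top ENNReal.ofReal_ne_top hne⟩
    exact this (hkey ▸ htop)
  · intro hne
    have hB' : sbrjuno (1 / r) ≠ ⊤ := by
      intro htop
      apply hne
      rw [hkey, htop, ENNReal.mul_top (by simp [ENNReal.ofReal_eq_zero]; linarith)]
      simp
    set b' := (sbrjuno (1/r)).toReal with hb'
    have hb'0 : 0 ≤ b' := ENNReal.toReal_nonneg
    have htr : (sbrjuno r).toReal = Real.log (1 / r) + r * b' := by
      rw [hkey, ENNReal.toReal_add ENNReal.ofReal_ne_top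
        (ENNReal.mul_ne_top ENNReal.ofReal_ne_top hB'), ENNReal.toReal_mul,
        ENNReal.toReal_ofReal hlog, ENNReal.toReal_ofReal h0.le]
    have hcond : Real.log (1 / r) ≤ (sbrjuno r).toReal := by
      rw [htr]; nlinarith
    have hval : hfun r (sbrjuno r).toReal = b' + r⁻¹ := by
      rw [hfun, if_pos hcond, htr]
      field_simp
      ring
    rw [hval, ← ENNReal.ofReal_toReal hB', ← hb']
    have h1r : (1:ℝ) ≤ r⁻¹ := by
      rw [le_inv_comm₀] <;> simp_all <;> linarith
    calc ENNReal.ofReal b' + 1 = ENNReal.ofReal (b' + 1) := by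
          rw [ENNReal.ofReal_add hb'0 zero_le_one, ENNReal.ofReal_one]
      _ ≤ ENNReal.ofReal (b' + r⁻¹) := ENNReal.ofReal_le_ofReal (by linarith)
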